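/- arXiv:2508.12049 — 2 statements merged into one kernel-verified Lean document; each statement's English description precedes it below -/
import Mathlib

section
/- Let χ : ℝ → ℝ be defined by χ(x) = 0 for x ≤ -3, χ(x) = (1/4)(x+3)^{11} for x ∈ [-3,-2], χ(x) = (1/4)[-19(x+1)^{11} - 22(x+1)^{10} + 4] for x ∈ [-2,-1], χ(x) = 1 for x ∈ [-1,0], and χ(x) = χ(-x) for x ≥ 0. Then χ is C² on ℝ, 0 ≤ χ(x) ≤ 1 for all x, and there is an absolute constant C such that |χ'(x)|² / χ(x) + |χ''(x)|² / χ(x) ≤ C wherever χ(x) > 0. -/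
noncomputable section

/-- The bump function `χ` from the paper, defined piecewise with degree-11 polynomial
pieces and extended evenly via `χ(x) = χ(-x)` for `x ≥ 0`. -/
def chi (x : ℝ) : ℝ :=
  let y : ℝ := -|x|
  if y ≤ -3 then 0
  else if y ≤ -2 then (1 / 4) * (y + 3) ^ 11
  else if y ≤ -1 then (1 / 4) * (-19 * (y + 1) ^ 11 - 22 * (y + 1) ^ 10 + 4)
  else 1

/-!
For `x ≤ 0`, `χ` is the piecewise polynomial profile `0, (y+3)¹¹/4`, inner piece, `1` on the
intervals cut at `-3, -2, -1`, whose values and first two derivatives agree at the cut points;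
`χ` coincides with this profile near every `x < 1` and with its reflection near every `x > -1`,
hence is `C²`. Since `χ` vanishes to order `11` at `-3`, the quotients `χ'²/χ` and `χ''²/χ` are
the polynomials `(121/4)(y+3)⁹` and `3025 (y+3)⁷` on `[-3, -2]`, and on `[-2, -1]` they are
bounded because `χ ≥ 1/4` there.
-/

open Set Filter Topology

theorem hasDerivAt_ite_le {E : Type*} [NormedAddCommGroup E] [NormedSpace ℝ E]
    {a : ℝ} {g h g' h' : ℝ → E} (hg : ∀ y, HasDerivAt g (g' y) y)
    (hh : ∀ y, HasDerivAt h (h' y) y) (hgh : g a = h a) (hgh' : g' a = h' a) (x : ℝ) :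
    HasDerivAt (fun y => if y ≤ a then g y else h y) (if x ≤ a then g' x else h' x) x := by
  rcases lt_trichotomy x a with hx | rfl | hx
  · rw [if_pos hx.le]
    exact (hg x).congr_of_eventuallyEq <|
      eventuallyEq_of_mem (Iio_mem_nhds hx) fun y hy => if_pos (le_of_lt hy)
  · rw [if_pos le_rfl]
    have hleft : HasDerivWithinAt (fun y => if y ≤ x then g y else h y) (g' x) (Iic x) x :=
      (hg x).hasDerivWithinAt.congr (fun y hy => if_pos hy) (if_pos le_rfl)
    have hright : HasDerivWithinAt (fun y => if y ≤ x then g y else h y) (g' x) (Ici x) x := by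
      rw [hgh']
      refine (hh x).hasDerivWithinAt.congr (fun y (hy : x ≤ y) => ?_) (by simp [hgh])
      rcases hy.eq_or_lt with rfl | hy
      · simp [hgh]
      · exact if_neg (not_le.2 hy)
    simpa only [Iic_union_Ici, hasDerivWithinAt_univ] using hleft.union hright
  · rw [if_neg (not_le.2 hx)]
    exact (hh x).congr_of_eventuallyEq <|
      eventuallyEq_of_mem (Ioi_mem_nhds hx) fun y hy => if_neg (not_le.2 hy)

def splice (c : ℝ) (p q : ℝ → ℝ) (y : ℝ) : ℝ :=
  if y ≤ -3 then 0 else if y ≤ -2 then p y else if y ≤ -1 then q y else c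

theorem splice_of_neg_one_lt {c : ℝ} {p q : ℝ → ℝ} {y : ℝ} (hy : -1 < y) :
    splice c p q y = c := by
  simp only [splice, if_neg (show ¬y ≤ -3 by linarith), if_neg (show ¬y ≤ -2 by linarith),
    if_neg (not_le.2 hy)]

theorem continuous_splice {c : ℝ} {p q : ℝ → ℝ} (hp : Continuous p) (hq : Continuous q)
    (hp₃ : p (-3) = 0) (hpq : p (-2) = q (-2)) (hq₁ : q (-1) = c) :
    Continuous (splice c p q) := by
  refine continuous_const.if_le (hp.if_le (hq.if_le continuous_const continuous_id
    continuous_const ?_) continuous_id continuous_const ?_) continuous_id continuous_const ?_ <;>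
  rintro y rfl <;> norm_num [hp₃, hpq, hq₁]

theorem hasDerivAt_splice {c : ℝ} {p q p' q' : ℝ → ℝ} (hp : ∀ y, HasDerivAt p (p' y) y)
    (hq : ∀ y, HasDerivAt q (q' y) y) (hp₃ : p (-3) = 0) (hp₃' : p' (-3) = 0)
    (hpq : p (-2) = q (-2)) (hpq' : p' (-2) = q' (-2)) (hq₁ : q (-1) = c) (hq₁' : q' (-1) = 0)
    (x : ℝ) : HasDerivAt (splice c p q) (splice 0 p' q' x) x := by
  have hinner := hasDerivAt_ite_le hq (fun y => hasDerivAt_const y c) hq₁ hq₁'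
  have hmiddle := hasDerivAt_ite_le (a := -2) hp hinner (by norm_num [hpq]) (by norm_num [hpq'])
  exact hasDerivAt_ite_le (fun y => hasDerivAt_const y 0) hmiddle (by norm_num [hp₃])
    (by norm_num [hp₃']) x

def outerPiece (y : ℝ) : ℝ := 1 / 4 * (y + 3) ^ 11
def outerPiece' (y : ℝ) : ℝ := 11 / 4 * (y + 3) ^ 10
def outerPiece'' (y : ℝ) : ℝ := 110 / 4 * (y + 3) ^ 9
def innerPiece (y : ℝ) : ℝ := 1 / 4 * (-19 * (y + 1) ^ 11 - 22 * (y + 1) ^ 10 + 4)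
def innerPiece' (y : ℝ) : ℝ := 1 / 4 * (-209 * (y + 1) ^ 10 - 220 * (y + 1) ^ 9)
def innerPiece'' (y : ℝ) : ℝ := 1 / 4 * (-2090 * (y + 1) ^ 9 - 1980 * (y + 1) ^ 8)

theorem hasDerivAt_outerPiece (y : ℝ) : HasDerivAt outerPiece (outerPiece' y) y := by
  have h := (((hasDerivAt_id y).add_const 3).pow 11).const_mul (1 / 4 : ℝ)
  exact h.congr_deriv (by norm_num [outerPiece']; ring)

theorem hasDerivAt_outerPiece' (y : ℝ) : HasDerivAt outerPiece' (outerPiece'' y) y := by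
  have h := (((hasDerivAt_id y).add_const 3).pow 10).const_mul (11 / 4 : ℝ)
  exact h.congr_deriv (by norm_num [outerPiece'']; ring)

theorem hasDerivAt_innerPiece (y : ℝ) : HasDerivAt innerPiece (innerPiece' y) y := by
  have hu := (hasDerivAt_id y).add_const 1
  have h := ((((hu.pow 11).const_mul (-19)).sub ((hu.pow 10).const_mul 22)).add_const 4).const_mul
    (1 / 4 : ℝ)
  exact h.congr_deriv (by norm_num [innerPiece']; ring)

theorem hasDerivAt_innerPiece' (y : ℝ) : HasDerivAt innerPiece' (innerPiece'' y) y := by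
  have hu := (hasDerivAt_id y).add_const 1
  have h := (((hu.pow 10).const_mul (-209)).sub ((hu.pow 9).const_mul 220)).const_mul (1 / 4 : ℝ)
  exact h.congr_deriv (by norm_num [innerPiece'']; ring)

theorem outerPiece_derivRatio_le {y : ℝ} (h₃ : -3 < y) (h₂ : y ≤ -2) :
    |outerPiece' y| ^ 2 / outerPiece y + |outerPiece'' y| ^ 2 / outerPiece y ≤ 3100 := by
  have ht : 0 < y + 3 := by linarith
  have ht₁ : y + 3 ≤ 1 := by linarith
  calc |outerPiece' y| ^ 2 / outerPiece y + |outerPiece'' y| ^ 2 / outerPiece y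
      = 121 / 4 * (y + 3) ^ 9 + 3025 * (y + 3) ^ 7 := by
        simp only [sq_abs, outerPiece, outerPiece', outerPiece'']
        field_simp
        ring
    _ ≤ 121 / 4 * 1 + 3025 * 1 := by
        gcongr <;> exact pow_le_one₀ ht.le ht₁
    _ ≤ 3100 := by norm_num

theorem pow_ten_sub_pow_eleven_le {s : ℝ} (h₀ : 0 ≤ s) (h₁ : s ≤ 1) :
    22 * s ^ 10 - 19 * s ^ 11 ≤ 3 := by
  have hfactor : 3 - (22 * s ^ 10 - 19 * s ^ 11) =
      (1 - s) * (3 * ∑ i ∈ Finset.range 10, (s ^ i - s ^ 10) + 11 * s ^ 10) := by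
    simp only [Finset.sum_range_succ, Finset.sum_range_zero]; ring
  have hsum : 0 ≤ ∑ i ∈ Finset.range 10, (s ^ i - s ^ 10) :=
    Finset.sum_nonneg fun i hi =>
      sub_nonneg.2 (pow_le_pow_of_le_one h₀ h₁ (Finset.mem_range.1 hi).le)
  suffices 0 ≤ 3 - (22 * s ^ 10 - 19 * s ^ 11) by linarith
  rw [hfactor]
  exact mul_nonneg (sub_nonneg.2 h₁) (add_nonneg (mul_nonneg (by norm_num) hsum) (by positivity))

theorem innerPiece_bounds {y : ℝ} (h₂ : -2 < y) (h₁ : y ≤ -1) :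
    1 / 4 ≤ innerPiece y ∧ innerPiece y ≤ 1 := by
  have hs := pow_ten_sub_pow_eleven_le (s := -(y + 1)) (by linarith) (by linarith)
  have h10 : 0 ≤ (y + 1) ^ 10 := Even.pow_nonneg (by decide) _
  have h11 : 0 ≤ -(y + 1) ^ 11 := by
    rw [← Odd.neg_pow (by decide)]; exact pow_nonneg (by linarith) _
  constructor
  · rw [innerPiece]; linarith [Odd.neg_pow (by decide : Odd 11) (y + 1),
      Even.neg_pow (by decide : Even 10) (y + 1)]
  · rw [innerPiece]; nlinarith

theorem abs_innerPiece'_le_and_abs_innerPiece''_le {y : ℝ} (h₂ : -2 < y) (h₁ : y ≤ -1) :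
    |innerPiece' y| ≤ 110 ∧ |innerPiece'' y| ≤ 1100 := by
  have hpow (n : ℕ) : -1 ≤ (y + 1) ^ n ∧ (y + 1) ^ n ≤ 1 := by
    rw [← abs_le, abs_pow]
    exact pow_le_one₀ (abs_nonneg _) (abs_le.2 ⟨by linarith, by linarith⟩)
  simp only [innerPiece', innerPiece'', abs_le]
  refine ⟨⟨?_, ?_⟩, ?_, ?_⟩ <;> linarith [hpow 8, hpow 9, hpow 10]

theorem innerPiece_derivRatio_le {y : ℝ} (h₂ : -2 < y) (h₁ : y ≤ -1) :
    |innerPiece' y| ^ 2 / innerPiece y + |innerPiece'' y| ^ 2 / innerPiece y ≤ 5 * 10 ^ 6 := by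
  obtain ⟨hlow, -⟩ := innerPiece_bounds h₂ h₁
  obtain ⟨hd₁, hd₂⟩ := abs_innerPiece'_le_and_abs_innerPiece''_le h₂ h₁
  have hsq₁ : |innerPiece' y| ^ 2 ≤ 110 ^ 2 := pow_le_pow_left₀ (abs_nonneg _) hd₁ 2
  have hsq₂ : |innerPiece'' y| ^ 2 ≤ 1100 ^ 2 := pow_le_pow_left₀ (abs_nonneg _) hd₂ 2
  rw [← add_div, div_le_iff₀ (by linarith)]
  linarith

def chiProfile : ℝ → ℝ := splice 1 outerPiece innerPiece
def chiProfile' : ℝ → ℝ := splice 0 outerPiece' innerPiece'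
def chiProfile'' : ℝ → ℝ := splice 0 outerPiece'' innerPiece''

theorem hasDerivAt_chiProfile (y : ℝ) : HasDerivAt chiProfile (chiProfile' y) y :=
  hasDerivAt_splice hasDerivAt_outerPiece hasDerivAt_innerPiece (by norm_num [outerPiece])
    (by norm_num [outerPiece']) (by norm_num [outerPiece, innerPiece])
    (by norm_num [outerPiece', innerPiece']) (by norm_num [innerPiece])
    (by norm_num [innerPiece']) y

theorem hasDerivAt_chiProfile' (y : ℝ) : HasDerivAt chiProfile' (chiProfile'' y) y :=
  hasDerivAt_splice hasDerivAt_outerPiece' hasDerivAt_innerPiece' (by norm_num [outerPiece'])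
    (by norm_num [outerPiece'']) (by norm_num [outerPiece', innerPiece'])
    (by norm_num [outerPiece'', innerPiece'']) (by norm_num [innerPiece'])
    (by norm_num [innerPiece'']) y

theorem deriv_chiProfile : deriv chiProfile = chiProfile' :=
  funext fun y => (hasDerivAt_chiProfile y).deriv

theorem deriv_chiProfile' : deriv chiProfile' = chiProfile'' :=
  funext fun y => (hasDerivAt_chiProfile' y).deriv

theorem continuous_chiProfile'' : Continuous chiProfile'' :=
  continuous_splice (by unfold outerPiece''; fun_prop) (by unfold innerPiece''; fun_prop)
    (by norm_num [outerPiece'']) (by norm_num [outerPiece'', innerPiece''])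
    (by norm_num [innerPiece''])

theorem contDiff_chiProfile : ContDiff ℝ 2 chiProfile := by
  rw [show (2 : WithTop ℕ∞) = 1 + 1 from rfl, contDiff_succ_iff_deriv, deriv_chiProfile,
    contDiff_one_iff_deriv, deriv_chiProfile']
  exact ⟨fun y => (hasDerivAt_chiProfile y).differentiableAt, by simp,
    fun y => (hasDerivAt_chiProfile' y).differentiableAt, continuous_chiProfile''⟩

theorem chiProfile_mem_Icc (y : ℝ) : chiProfile y ∈ Icc 0 1 := by
  simp only [chiProfile, splice]
  split_ifs with h₃ h₂ h₁
  · simp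
  · have ht : 0 < y + 3 := by linarith [not_le.1 h₃]
    have ht₁ : (y + 3) ^ 11 ≤ 1 := pow_le_one₀ ht.le (by linarith)
    exact ⟨by unfold outerPiece; positivity, by unfold outerPiece; linarith⟩
  · obtain ⟨hlow, hup⟩ := innerPiece_bounds (not_le.1 h₂) h₁
    exact ⟨by linarith, hup⟩
  · simp

def derivRatio (φ : ℝ → ℝ) (x : ℝ) : ℝ :=
  |deriv φ x| ^ 2 / φ x + |deriv (deriv φ) x| ^ 2 / φ x

theorem Filter.EventuallyEq.derivRatio_eq {φ ψ : ℝ → ℝ} {x : ℝ} (h : φ =ᶠ[𝓝 x] ψ) :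
    derivRatio φ x = derivRatio ψ x := by
  simp only [derivRatio, h.eq_of_nhds, h.deriv_eq, h.deriv.deriv_eq]

theorem derivRatio_comp_neg (φ : ℝ → ℝ) (x : ℝ) :
    derivRatio (fun y => φ (-y)) x = derivRatio φ (-x) := by
  have h : deriv (fun y => φ (-y)) = fun y => -deriv φ (-y) := funext (deriv_comp_neg φ)
  simp only [derivRatio, h, deriv.fun_neg, deriv_comp_neg, abs_neg, neg_neg]

theorem derivRatio_chiProfile_le {y : ℝ} (hy : 0 < chiProfile y) :
    derivRatio chiProfile y ≤ 5 * 10 ^ 6 := by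
  rw [derivRatio, deriv_chiProfile, deriv_chiProfile']
  simp only [chiProfile, chiProfile', chiProfile'', splice] at hy ⊢
  split_ifs at hy ⊢ with h₃ h₂ h₁
  · exact absurd hy (lt_irrefl 0)
  · linarith [outerPiece_derivRatio_le (not_le.1 h₃) h₂]
  · exact innerPiece_derivRatio_le (not_le.1 h₂) h₁
  · norm_num

theorem chi_eq_chiProfile_neg_abs (x : ℝ) : chi x = chiProfile (-|x|) := rfl

theorem chi_neg (x : ℝ) : chi (-x) = chi x := by
  rw [chi_eq_chiProfile_neg_abs, chi_eq_chiProfile_neg_abs, abs_neg]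

theorem chi_eq_chiProfile {x : ℝ} (hx : x < 1) : chi x = chiProfile x := by
  rw [chi_eq_chiProfile_neg_abs]
  rcases le_or_gt x 0 with h | h
  · rw [abs_of_nonpos h, neg_neg]
  · rw [chiProfile, splice_of_neg_one_lt (by linarith [abs_of_pos h]),
      splice_of_neg_one_lt (by linarith)]

theorem chi_eventuallyEq_chiProfile {x : ℝ} (hx : x < 1) : chi =ᶠ[𝓝 x] chiProfile :=
  eventuallyEq_of_mem (Iio_mem_nhds hx) fun _ hy => chi_eq_chiProfile hy

theorem chi_eventuallyEq_chiProfile_neg {x : ℝ} (hx : -1 < x) :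
    chi =ᶠ[𝓝 x] fun y => chiProfile (-y) :=
  eventuallyEq_of_mem (Ioi_mem_nhds hx) fun y (hy : -1 < y) => by
    rw [← chi_neg, chi_eq_chiProfile (by linarith)]

theorem contDiff_chi : ContDiff ℝ 2 chi := by
  refine contDiff_iff_contDiffAt.2 fun x => ?_
  rcases le_or_gt x 0 with hx | hx
  · exact contDiff_chiProfile.contDiffAt.congr_of_eventuallyEq
      (chi_eventuallyEq_chiProfile (by linarith))
  · exact (contDiff_chiProfile.comp contDiff_neg).contDiffAt.congr_of_eventuallyEq
      (chi_eventuallyEq_chiProfile_neg (by linarith))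

theorem derivRatio_chi_le {x : ℝ} (hx : 0 < chi x) : derivRatio chi x ≤ 5 * 10 ^ 6 := by
  rcases le_or_gt x 0 with h | h
  · have hloc := chi_eventuallyEq_chiProfile (x := x) (by linarith)
    rw [hloc.eq_of_nhds] at hx
    rw [hloc.derivRatio_eq]
    exact derivRatio_chiProfile_le hx
  · have hloc := chi_eventuallyEq_chiProfile_neg (x := x) (by linarith)
    rw [hloc.eq_of_nhds] at hx
    rw [hloc.derivRatio_eq, derivRatio_comp_neg]
    exact derivRatio_chiProfile_le hx

/-- `χ` is `C²`, takes values in `[0,1]`, and satisfies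
`|χ'|²/χ + |χ''|²/χ ≤ C` wherever `χ > 0`, for an absolute constant `C`. -/
theorem chi_properties :
    ContDiff ℝ 2 chi ∧ (∀ x : ℝ, 0 ≤ chi x ∧ chi x ≤ 1) ∧
      ∃ C : ℝ, 0 < C ∧ ∀ x : ℝ, 0 < chi x →
        |deriv chi x| ^ 2 / chi x + |deriv (deriv chi) x| ^ 2 / chi x ≤ C :=
  ⟨contDiff_chi, fun x => chiProfile_mem_Icc (-|x|), 5 * 10 ^ 6, by norm_num,
    fun _ hx => derivRatio_chi_le hx⟩
end
end

section
/- For every x ∈ ℝ³, every t ≠ 0, every sign μ ∈ {+1, -1}, and every k, l ∈ ℤ, the set S_{k,l}(t,x) = { ξ ∈ ℝ³ : |1 + μ (x·ξ)/(t|ξ|)| ≤ 2^l and 2^{k-1} ≤ |ξ| ≤ 2^k } has Lebesgue measure at most C · 2^{3k + l} for an absolute constant C independent of t, x, k, l, μ. -/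
open MeasureTheory

noncomputable section

local notation "E3" => EuclideanSpace ℝ (Fin 3)

/-!
Put `v = (μ / t) • x`. For a direction `ω = ξ / ‖ξ‖`, the condition `|1 + ⟪v, ω⟫| ≤ 2 ^ l` confines
the cosine `⟪e, ω⟫` with a suitable unit vector `e` to an interval of length `4 · 2 ^ l`. So it
suffices that a spherical sector of radius `R`, whose cosines with `e` range over an interval of
length `δ`, has volume `O(R³ δ)` (an estimate in the spirit of Archimedes' zone theorem).

Rotate `e` to the first axis and use cylindrical coordinates `ξ = (s, w) ∈ ℝ × ℝ²`, with radius
`r = ‖ξ‖` and cosine `c = s / r`. Near the poles (`|c| ≥ 1/2`) fix `s`: then `r = s / c` varies by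
`O(R δ)`, so `w` runs over an annulus of area `O(R² δ)`. Near the equator (`|c| ≤ 1/2`) fix `w`:
then `s` varies by `O(R δ)`, while `w` lies in a disc of radius `R`.
-/

open Real Set Metric
open scoped ENNReal RealInnerProductSpace

local notation "E2" => EuclideanSpace ℝ (Fin 2)

local notation "e₀" => EuclideanSpace.single (0 : Fin 3) (1 : ℝ)

theorem abs_sub_le_two_mul_abs_div_sub_div {s r r' : ℝ} (hr : 0 < r) (hr' : 0 < r')
    (hs : r ≤ 2 * |s|) :
    |r - r'| ≤ 2 * r' * |s / r - s / r'| := by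
  have key : |s / r - s / r'| * (r * r') = |s| * |r - r'| := by
    rw [div_sub_div _ _ hr.ne' hr'.ne', abs_div, abs_of_pos (mul_pos hr hr'),
      div_mul_cancel₀ _ (mul_pos hr hr').ne', ← abs_mul, abs_sub_comm]
    congr 1; ring
  nlinarith [abs_nonneg (r - r'), abs_nonneg (s / r - s / r'), mul_pos hr hr']

theorem abs_sub_le_two_mul_abs_div_sub_div_of_sq_sub_sq_eq {s s' r r' : ℝ} (hr : 0 < r)
    (hr' : 0 < r') (hw : r ^ 2 - s ^ 2 = r' ^ 2 - s' ^ 2) (hs : 2 * |s| ≤ r) :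
    |s - s'| ≤ 2 * r' * |s / r - s' / r'| := by
  set c := s / r
  set c' := s' / r'
  have hsc : s = c * r := by simp [c, hr.ne']
  have hsc' : s' = c' * r' := by simp [c', hr'.ne']
  have hc : |c| ≤ 1 / 2 := by
    rw [abs_div, abs_of_pos hr, div_le_iff₀ hr]; linarith
  have hs' : |s'| ≤ r' := abs_le_of_sq_le_sq (by nlinarith [sq_abs s, abs_nonneg s]) hr'.le
  have key : (s - s') * (r + r' - c * (s + s')) = (c - c') * r' * (r + r') := by
    linear_combination (r + r') * hsc - (r + r') * hsc' + c * hw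
  have hlow : (r + r') / 2 ≤ r + r' - c * (s + s') := by
    have h1 : |c * (s + s')| ≤ (r + r') / 2 := by
      rw [abs_mul]
      nlinarith [abs_add_le s s', abs_nonneg c, abs_nonneg (s + s')]
    linarith [le_abs_self (c * (s + s'))]
  have := congrArg abs key
  rw [abs_mul, abs_mul, abs_mul, abs_of_pos hr', abs_of_pos (add_pos hr hr'),
    abs_of_pos (show 0 < r + r' - c * (s + s') by linarith)] at this
  nlinarith [abs_nonneg (s - s'), abs_nonneg (c - c')]

theorem measure_prod_le_of_slice_le {α β : Type*} [MeasurableSpace α] [MeasurableSpace β]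
    (μ : Measure α) (ν : Measure β) [SFinite ν] {T : Set (α × β)} (hT : MeasurableSet T)
    (A : Set α) (m : ℝ≥0∞) (h : ∀ a b, (a, b) ∈ T → a ∈ A ∧ ν (Prod.mk a ⁻¹' T) ≤ m) :
    μ.prod ν T ≤ μ A * m := by
  rw [Measure.prod_apply hT, mul_comm]
  refine (lintegral_mono fun a => ?_).trans (lintegral_indicator_const_le A m)
  rcases (Prod.mk a ⁻¹' T).eq_empty_or_nonempty with h0 | ⟨b, hb⟩
  · simp [h0]
  · obtain ⟨ha, hm⟩ := h a b hb
    simpa [ha] using hm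

theorem measure_prod_le_of_slice_le_symm {α β : Type*} [MeasurableSpace α] [MeasurableSpace β]
    (μ : Measure α) (ν : Measure β) [SFinite μ] [SFinite ν] {T : Set (α × β)}
    (hT : MeasurableSet T) (B : Set β) (m : ℝ≥0∞)
    (h : ∀ a b, (a, b) ∈ T → b ∈ B ∧ μ ((·, b) ⁻¹' T) ≤ m) :
    μ.prod ν T ≤ ν B * m := by
  rw [← (Measure.measurePreserving_swap (μ := ν) (ν := μ)).measure_preimage hT.nullMeasurableSet]
  exact measure_prod_le_of_slice_le ν μ (measurable_swap hT) B m fun b a hab => h a b hab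

theorem volume_annulus_le {A B : ℝ} (hA : 0 ≤ A) (hAB : A ≤ B) :
    volume {w : E2 | ‖w‖ ^ 2 ∈ Icc A B} ≤ ENNReal.ofReal (π * (B - A)) := by
  have hsub : {w : E2 | ‖w‖ ^ 2 ∈ Icc A B} ⊆ closedBall 0 √B \ ball 0 √A := by
    rintro w ⟨hwA, hwB⟩
    simp only [mem_sdiff, mem_closedBall, dist_zero_right, mem_ball, not_lt]
    exact ⟨le_sqrt_of_sq_le hwB, (sqrt_le_sqrt hwA).trans_eq (sqrt_sq (norm_nonneg w))⟩
  have hball : ball (0 : E2) √A ⊆ closedBall 0 √B :=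
    (ball_subset_ball (sqrt_le_sqrt hAB)).trans ball_subset_closedBall
  have hdisc : ∀ C, 0 ≤ C → ENNReal.ofReal √C ^ 2 * ENNReal.ofReal π = ENNReal.ofReal (π * C) :=
    fun C hC => by rw [← ENNReal.ofReal_pow (sqrt_nonneg C), sq_sqrt hC, mul_comm,
      ENNReal.ofReal_mul pi_pos.le]
  calc volume {w : E2 | ‖w‖ ^ 2 ∈ Icc A B}
      ≤ volume (closedBall (0 : E2) √B) - volume (ball (0 : E2) √A) :=
        (measure_mono hsub).trans_eq
          (measure_sdiff hball measurableSet_ball.nullMeasurableSet measure_ball_lt_top.ne)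
    _ = ENNReal.ofReal (π * (B - A)) := by
        rw [EuclideanSpace.volume_closedBall_fin_two, EuclideanSpace.volume_ball_fin_two,
          hdisc B (hA.trans hAB), hdisc A hA, ← ENNReal.ofReal_sub _ (by positivity), mul_sub]

def cylindricalCoords : E3 ≃ᵐ ℝ × E2 :=
  (MeasurableEquiv.toLp 2 (Fin 3 → ℝ)).symm.trans <|
    (MeasurableEquiv.piFinSuccAbove (fun _ => ℝ) 0).trans <|
      MeasurableEquiv.prodCongr (MeasurableEquiv.refl ℝ) (MeasurableEquiv.toLp 2 (Fin 2 → ℝ))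

theorem measurePreserving_cylindricalCoords_symm : MeasurePreserving cylindricalCoords.symm := by
  refine MeasurePreserving.symm _ ?_
  exact (EuclideanSpace.volume_preserving_symm_measurableEquiv_toLp (Fin 3)).trans <|
    (volume_preserving_piFinSuccAbove (fun _ => ℝ) 0).trans <|
      (MeasurePreserving.id volume).prod (PiLp.volume_preserving_toLp (Fin 2))

theorem cylindricalCoords_symm_apply_zero (p : ℝ × E2) : cylindricalCoords.symm p 0 = p.1 := by
  simp [cylindricalCoords, MeasurableEquiv.prodCongr]

theorem norm_cylindricalCoords_symm_sq (p : ℝ × E2) :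
    ‖cylindricalCoords.symm p‖ ^ 2 = p.1 ^ 2 + ‖p.2‖ ^ 2 := by
  simp [cylindricalCoords, MeasurableEquiv.prodCongr, EuclideanSpace.norm_sq_eq,
    Fin.sum_univ_succ]

def sphericalSector (e : E3) (R : ℝ) (I : Set ℝ) : Set E3 :=
  {ξ | ‖ξ‖ ∈ Ioc 0 R ∧ ⟪e, ξ⟫ / ‖ξ‖ ∈ I}

theorem measurableSet_sphericalSector (e : E3) (R : ℝ) {I : Set ℝ} (hI : MeasurableSet I) :
    MeasurableSet (sphericalSector e R I) :=
  (measurable_norm measurableSet_Ioc).inter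
    (((continuous_const.inner continuous_id).measurable.div measurable_norm) hI)

theorem exists_radius_of_cylindricalCoords_symm_mem {R : ℝ} {I : Set ℝ} {p : ℝ × E2}
    (hp : cylindricalCoords.symm p ∈ sphericalSector e₀ R I) :
    ∃ r, 0 < r ∧ r ≤ R ∧ p.1 / r ∈ I ∧ r ^ 2 = p.1 ^ 2 + ‖p.2‖ ^ 2 := by
  obtain ⟨⟨hr, hrR⟩, hc⟩ := hp
  refine ⟨_, hr, hrR, ?_, norm_cylindricalCoords_symm_sq p⟩
  simpa [EuclideanSpace.inner_single_left, cylindricalCoords_symm_apply_zero] using hc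

theorem volume_sphericalSector_le_of_polar {R a b : ℝ} {I : Set ℝ} (hR : 0 ≤ R)
    (hI : MeasurableSet I) (hIab : I ⊆ Icc a b) (hpolar : ∀ c ∈ I, 1 ≤ 2 * |c|) :
    volume (sphericalSector e₀ R I) ≤ ENNReal.ofReal (16 * π * R ^ 3 * (b - a)) := by
  have hT := measurableSet_sphericalSector e₀ R hI
  rw [← measurePreserving_cylindricalCoords_symm.measure_preimage hT.nullMeasurableSet,
    Measure.volume_eq_prod]
  refine (measure_prod_le_of_slice_le _ _ (cylindricalCoords.symm.measurable hT) (Icc (-R) R)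
    (ENNReal.ofReal (8 * π * R ^ 2 * (b - a))) fun s w₀ hw₀ => ?_).trans ?_
  · obtain ⟨r₀, hr₀, hr₀R, hc₀, hr₀sq⟩ := exists_radius_of_cylindricalCoords_symm_mem hw₀
    obtain ⟨ha₀, hb₀⟩ := hIab hc₀
    have hδ : 0 ≤ 4 * R ^ 2 * (b - a) := mul_nonneg (by positivity) (by linarith)
    have hsR : |s| ≤ R :=
      (abs_le_of_sq_le_sq (by nlinarith [sq_nonneg ‖w₀‖]) hr₀.le).trans hr₀R
    have hslice : Prod.mk s ⁻¹' (cylindricalCoords.symm ⁻¹' sphericalSector e₀ R I) ⊆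
        {w : E2 | ‖w‖ ^ 2 ∈ Icc (max (‖w₀‖ ^ 2 - 4 * R ^ 2 * (b - a)) 0)
          (‖w₀‖ ^ 2 + 4 * R ^ 2 * (b - a))} := by
      intro w hw
      obtain ⟨r, hr, hrR, hc, hrsq⟩ := exists_radius_of_cylindricalCoords_symm_mem hw
      obtain ⟨ha, hb⟩ := hIab hc
      have hs : r ≤ 2 * |s| := by
        have := hpolar _ hc
        rwa [abs_div, abs_of_pos hr, mul_div_assoc', le_div_iff₀ hr, one_mul] at this
      have hdiff : |r - r₀| ≤ 2 * R * (b - a) :=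
        (abs_sub_le_two_mul_abs_div_sub_div hr hr₀ hs).trans <| mul_le_mul (by linarith)
          (abs_sub_le_iff.mpr ⟨by linarith, by linarith⟩) (abs_nonneg _) (by linarith)
      have hsq : |r ^ 2 - r₀ ^ 2| ≤ 4 * R ^ 2 * (b - a) := by
        rw [show r ^ 2 - r₀ ^ 2 = (r - r₀) * (r + r₀) by ring, abs_mul,
          abs_of_pos (add_pos hr hr₀)]
        nlinarith [abs_nonneg (r - r₀)]
      rw [abs_le] at hsq
      exact ⟨max_le (by linarith) (by positivity), by linarith⟩
    refine ⟨abs_le.mp hsR, (measure_mono hslice).trans ((volume_annulus_le (le_max_right _ _)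
      (max_le (by linarith) (by positivity))).trans ?_)⟩
    rw [show 8 * π * R ^ 2 * (b - a) = π * (8 * R ^ 2 * (b - a)) by ring]
    gcongr
    linarith [le_max_left (‖w₀‖ ^ 2 - 4 * R ^ 2 * (b - a)) 0]
  · rw [Real.volume_Icc, ← ENNReal.ofReal_mul (by linarith)]
    exact le_of_eq (congrArg _ (by ring))

theorem volume_sphericalSector_le_of_equatorial {R a b : ℝ} {I : Set ℝ} (hR : 0 ≤ R)
    (hI : MeasurableSet I) (hIab : I ⊆ Icc a b) (hequator : ∀ c ∈ I, 2 * |c| ≤ 1) :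
    volume (sphericalSector e₀ R I) ≤ ENNReal.ofReal (2 * π * R ^ 3 * (b - a)) := by
  have hT := measurableSet_sphericalSector e₀ R hI
  rw [← measurePreserving_cylindricalCoords_symm.measure_preimage hT.nullMeasurableSet,
    Measure.volume_eq_prod]
  refine (measure_prod_le_of_slice_le_symm _ _ (cylindricalCoords.symm.measurable hT)
    (closedBall 0 R) (ENNReal.ofReal (2 * R * (b - a))) fun s₀ w hw => ?_).trans ?_
  · obtain ⟨r₀, hr₀, hr₀R, hc₀, hr₀sq⟩ := exists_radius_of_cylindricalCoords_symm_mem hw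
    have hab : a ≤ b := (hIab hc₀).1.trans (hIab hc₀).2
    have hwR : ‖w‖ ≤ R := (sq_le_sq₀ (norm_nonneg w) hR).mp (by nlinarith [sq_nonneg s₀])
    refine ⟨mem_closedBall_zero_iff.mpr hwR, (Real.volume_le_diam _).trans (ediam_le ?_)⟩
    rintro s hs s' hs'
    obtain ⟨r, hr, -, hc, hrsq⟩ := exists_radius_of_cylindricalCoords_symm_mem hs
    obtain ⟨r', hr', hr'R, hc', hr'sq⟩ := exists_radius_of_cylindricalCoords_symm_mem hs'
    obtain ⟨ha, hb⟩ := hIab hc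
    obtain ⟨ha', hb'⟩ := hIab hc'
    have hs : 2 * |s| ≤ r := by
      have := hequator _ hc
      rwa [abs_div, abs_of_pos hr, mul_div_assoc', div_le_iff₀ hr, one_mul] at this
    rw [edist_le_ofReal (by have := sub_nonneg.mpr hab; positivity), Real.dist_eq]
    exact (abs_sub_le_two_mul_abs_div_sub_div_of_sq_sub_sq_eq hr hr' (by linarith) hs).trans <|
      mul_le_mul (by linarith) (abs_sub_le_iff.mpr ⟨by linarith, by linarith⟩) (abs_nonneg _)
        (by linarith)
  · rw [EuclideanSpace.volume_closedBall_fin_two, ← ENNReal.ofReal_pow hR,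
      ← ENNReal.ofReal_mul (by positivity), ← ENNReal.ofReal_mul (by positivity)]
    exact le_of_eq (congrArg _ (by ring))

theorem volume_sphericalSector_single_le {R a b : ℝ} (hR : 0 ≤ R) (hab : a ≤ b) :
    volume (sphericalSector e₀ R (Icc a b)) ≤ ENNReal.ofReal (18 * π * R ^ 3 * (b - a)) := by
  have hpolar : MeasurableSet {c : ℝ | 1 ≤ 2 * |c|} :=
    measurableSet_le measurable_const (by fun_prop)
  have hequator : MeasurableSet {c : ℝ | 2 * |c| ≤ 1} :=
    measurableSet_le (by fun_prop) measurable_const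
  have hsplit : sphericalSector e₀ R (Icc a b) ⊆
      sphericalSector e₀ R (Icc a b ∩ {c | 1 ≤ 2 * |c|}) ∪
        sphericalSector e₀ R (Icc a b ∩ {c | 2 * |c| ≤ 1}) := by
    rintro ξ ⟨hr, hc⟩
    rcases le_total 1 (2 * |⟪e₀, ξ⟫ / ‖ξ‖|) with h | h
    exacts [Or.inl ⟨hr, hc, h⟩, Or.inr ⟨hr, hc, h⟩]
  calc volume (sphericalSector e₀ R (Icc a b))
      ≤ ENNReal.ofReal (16 * π * R ^ 3 * (b - a)) + ENNReal.ofReal (2 * π * R ^ 3 * (b - a)) :=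
        (measure_mono hsplit).trans <| (measure_union_le _ _).trans <| add_le_add
          (volume_sphericalSector_le_of_polar hR (measurableSet_Icc.inter hpolar)
            inter_subset_left fun _ hc => hc.2)
          (volume_sphericalSector_le_of_equatorial hR (measurableSet_Icc.inter hequator)
            inter_subset_left fun _ hc => hc.2)
    _ = ENNReal.ofReal (18 * π * R ^ 3 * (b - a)) := by
        have := sub_nonneg.mpr hab
        rw [← ENNReal.ofReal_add (by positivity) (by positivity)]
        ring_nf

theorem sphericalSector_eq_preimage (f : E3 ≃ₗᵢ[ℝ] E3) (e : E3) (R : ℝ) (I : Set ℝ) :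
    sphericalSector e R I = f ⁻¹' sphericalSector (f e) R I := by
  ext ξ
  simp [sphericalSector, LinearIsometryEquiv.inner_map_map]

theorem volume_sphericalSector_eq_of_norm_eq {e e' : E3} (h : ‖e‖ = ‖e'‖) (R : ℝ)
    {I : Set ℝ} (hI : MeasurableSet I) :
    volume (sphericalSector e R I) = volume (sphericalSector e' R I) := by
  rw [sphericalSector_eq_preimage (ℝ ∙ (e - e'))ᗮ.reflection, Submodule.reflection_sub h]
  exact (LinearIsometryEquiv.measurePreserving _).measure_preimage
    (measurableSet_sphericalSector e' R hI).nullMeasurableSet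

theorem volume_sphericalSector_le {e : E3} (he : ‖e‖ = 1) {R a b : ℝ} (hR : 0 ≤ R)
    (hab : a ≤ b) :
    volume (sphericalSector e R (Icc a b)) ≤ ENNReal.ofReal (18 * π * R ^ 3 * (b - a)) := by
  rw [volume_sphericalSector_eq_of_norm_eq (e' := e₀) (by simpa using he) R measurableSet_Icc]
  exact volume_sphericalSector_single_le hR hab

theorem exists_inner_mem_Icc_of_abs_one_add_inner_le {E : Type*} [NormedAddCommGroup E]
    [InnerProductSpace ℝ E] [Nontrivial E] (v : E) (ε : ℝ) :
    ∃ e : E, ‖e‖ = 1 ∧ ∃ a : ℝ, ∀ ω : E, ‖ω‖ = 1 → |1 + ⟪v, ω⟫| ≤ ε →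
      ⟪e, ω⟫ ∈ Icc a (a + 4 * ε) := by
  by_cases hv : 1 ≤ 2 * ‖v‖
  · have hv0 : 0 < ‖v‖ := by linarith
    refine ⟨‖v‖⁻¹ • v, by simp [norm_smul, hv0.ne'], (-1 - ε) / ‖v‖, fun ω _ hω => ?_⟩
    rw [real_inner_smul_left, inv_mul_eq_div]
    have hε : 0 ≤ ε := (abs_nonneg _).trans hω
    obtain ⟨h1, h2⟩ := abs_le.mp hω
    constructor
    · exact div_le_div_of_nonneg_right (by linarith) hv0.le
    · rw [div_add' _ _ _ hv0.ne', div_le_div_iff_of_pos_right hv0]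
      nlinarith
  · -- here `|⟪v, ω⟫| < 1 / 2`, so the hypothesis forces `ε > 1 / 2` and any unit vector works
    obtain ⟨e, he⟩ := exists_norm_eq E zero_le_one
    refine ⟨e, he, -1, fun ω hω1 hω => ?_⟩
    have hv' := (abs_real_inner_le_norm v ω).trans_eq (by rw [hω1, mul_one])
    have he' := (abs_real_inner_le_norm e ω).trans_eq (by rw [hω1, he, mul_one])
    rw [abs_le] at hv' he' hω
    constructor <;> linarith

/-- Measure estimate for the stationary-phase localized set
`S_{k,l}(t,x) = {ξ : |1 + μ x·ξ/(t|ξ|)| ≤ 2^l, 2^{k-1} ≤ |ξ| ≤ 2^k}`: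
its Lebesgue measure is at most `C · 2^{3k+l}` uniformly in `t, x, k, l, μ`. -/
theorem measure_estimate_localized_set :
    ∃ C : ℝ, 0 < C ∧ ∀ (x : E3) (t μ : ℝ) (k l : ℤ), t ≠ 0 → (μ = 1 ∨ μ = -1) →
      volume {ξ : E3 | |1 + μ * (inner ℝ x ξ : ℝ) / (t * ‖ξ‖)| ≤ (2 : ℝ) ^ l ∧
          ‖ξ‖ ∈ Set.Icc ((2 : ℝ) ^ (k - 1)) ((2 : ℝ) ^ k)} ≤
        ENNReal.ofReal (C * (2 : ℝ) ^ (3 * k + l)) := by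
  refine ⟨72 * π, by positivity, fun x t μ k l _ _ => ?_⟩
  obtain ⟨e, he, a, ha⟩ :=
    exists_inner_mem_Icc_of_abs_one_add_inner_le ((μ / t) • x) ((2 : ℝ) ^ l)
  have hsub : {ξ : E3 | |1 + μ * (inner ℝ x ξ : ℝ) / (t * ‖ξ‖)| ≤ (2 : ℝ) ^ l ∧
      ‖ξ‖ ∈ Set.Icc ((2 : ℝ) ^ (k - 1)) ((2 : ℝ) ^ k)} ⊆
      sphericalSector e (2 ^ k) (Icc a (a + 4 * 2 ^ l)) := by
    rintro ξ ⟨hξ, hk₁, hk⟩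
    have hξ0 : 0 < ‖ξ‖ := (zpow_pos (two_pos (α := ℝ)) _).trans_le hk₁
    refine ⟨⟨hξ0, hk⟩, ?_⟩
    have hω : ⟪(μ / t) • x, ‖ξ‖⁻¹ • ξ⟫ = μ * ⟪x, ξ⟫ / (t * ‖ξ‖) := by
      rw [real_inner_smul_left, real_inner_smul_right]; ring
    simpa only [real_inner_smul_right, inv_mul_eq_div] using
      ha (‖ξ‖⁻¹ • ξ) (norm_smul_inv_norm (norm_pos_iff.mp hξ0)) (hω ▸ hξ)
  calc _ ≤ _ := measure_mono hsub
    _ ≤ _ := volume_sphericalSector_le he (by positivity)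
      (by linarith [zpow_pos (two_pos (α := ℝ)) l])
    _ = _ := by
      rw [zpow_add₀ two_ne_zero, mul_comm 3 k, zpow_mul, show (3 : ℤ) = (3 : ℕ) from rfl,
        zpow_natCast]
      ring_nf
end
end
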